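/- arXiv:1603.04178 — 3 statements merged into one kernel-verified Lean document; each statement's English description precedes it below -/
import Mathlib

section
/- Let r ∈ ℝ³, let K be a 6×n real matrix, let m, g ∈ ℝ, let I_c and M_j be 3×3 and n×n real matrices respectively. Define T := fromBlocks (X(r)) (X(r)*K) 0 1ₙ, M̄ := fromBlocks (fromBlocks (m•1₃) 0 0 I_c) 0 0 M_j (a block-diagonal (6+n)×(6+n) matrix), and M := Tᵀ * M̄ * T. Let e₃ ∈ ℝ^{6+n} be the vector whose third component (the third of the first six, i.e. index Sum.inl 2) is 1 and all other components are 0. Then the gravity vector G := g • (M *ᵥ e₃) satisfies (Tᵀ)⁻¹ *ᵥ G = (m*g) • e₃; i.e., the transformed gravity term is the constant vector m g e₃. -/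
open Matrix

/-- `S x` is the 3×3 skew-symmetric matrix with `S x *ᵥ y = x × y`. -/
def S (x : Fin 3 → ℝ) : Matrix (Fin 3) (Fin 3) ℝ :=
  !![0, -x 2, x 1; x 2, 0, -x 0; -x 1, x 0, 0]

/-- `X r = fromBlocks 1₃ (-S r) 0 1₃`. -/
def X (r : Fin 3 → ℝ) : Matrix (Fin 3 ⊕ Fin 3) (Fin 3 ⊕ Fin 3) ℝ :=
  Matrix.fromBlocks 1 (-(S r)) 0 1

/-! Gravity acts along `e₃`, a vector supported in the first (linear) block. Every block-upper-
triangular matrix with `1` in the top-left corner fixes such vectors, so `T e₃ = e₃`, and `M̄` is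
`m • 1` there, so `M̄ e₃ = m e₃`. Hence `(Tᵀ)⁻¹ M e₃ = M̄ T e₃ = m e₃`, as `T` is unimodular. -/

theorem Matrix.fromBlocks_zero₂₁_mulVec_elim_zero {l n α : Type*} [Fintype l] [Fintype n]
    [NonUnitalNonAssocSemiring α] (A : Matrix l l α) (B : Matrix l n α) (D : Matrix n n α)
    (u : l → α) : fromBlocks A B 0 D *ᵥ Sum.elim u 0 = Sum.elim (A *ᵥ u) 0 := by
  simp [fromBlocks_mulVec, Function.comp_def, ← Pi.zero_def]

theorem det_X (r : Fin 3 → ℝ) : (X r).det = 1 := by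
  simp [X]

theorem X_mulVec_elim_zero (r : Fin 3 → ℝ) (u : Fin 3 → ℝ) :
    X r *ᵥ Sum.elim u 0 = Sum.elim u 0 := by
  simp [X, fromBlocks_zero₂₁_mulVec_elim_zero]

theorem stmt_5 (n : ℕ) (r : Fin 3 → ℝ) (K : Matrix (Fin 3 ⊕ Fin 3) (Fin n) ℝ)
    (m g : ℝ) (I_c : Matrix (Fin 3) (Fin 3) ℝ) (M_j : Matrix (Fin n) (Fin n) ℝ) :
    let T : Matrix ((Fin 3 ⊕ Fin 3) ⊕ Fin n) ((Fin 3 ⊕ Fin 3) ⊕ Fin n) ℝ :=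
      Matrix.fromBlocks (X r) (X r * K) 0 1
    let Mbar : Matrix ((Fin 3 ⊕ Fin 3) ⊕ Fin n) ((Fin 3 ⊕ Fin 3) ⊕ Fin n) ℝ :=
      Matrix.fromBlocks
        (Matrix.fromBlocks (m • (1 : Matrix (Fin 3) (Fin 3) ℝ)) 0 0 I_c) 0 0 M_j
    let M : Matrix ((Fin 3 ⊕ Fin 3) ⊕ Fin n) ((Fin 3 ⊕ Fin 3) ⊕ Fin n) ℝ := Tᵀ * Mbar * T
    let e₃ : ((Fin 3 ⊕ Fin 3) ⊕ Fin n) → ℝ :=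
      fun i => if i = Sum.inl (Sum.inl 2) then 1 else 0
    let G : ((Fin 3 ⊕ Fin 3) ⊕ Fin n) → ℝ := g • (M *ᵥ e₃)
    (Tᵀ)⁻¹ *ᵥ G = (m * g) • e₃ := by
  intro T Mbar M e₃ G
  have he₃ : e₃ = Sum.elim (Sum.elim (Pi.single 2 1) 0) 0 := by
    funext i
    rcases i with (j | j) | j <;> simp [e₃, Pi.single_apply]
  have hT : IsUnit Tᵀ.det := by simp [T, det_X]
  have hTe : T *ᵥ e₃ = e₃ := by
    rw [he₃, fromBlocks_zero₂₁_mulVec_elim_zero, X_mulVec_elim_zero]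
  have hMe : Mbar *ᵥ e₃ = m • e₃ := by
    rw [he₃, fromBlocks_zero₂₁_mulVec_elim_zero, fromBlocks_zero₂₁_mulVec_elim_zero, smul_mulVec,
      one_mulVec]
    ext ((j | j) | j) <;> simp [Pi.single_apply]
  calc (Tᵀ)⁻¹ *ᵥ G = g • (((Tᵀ)⁻¹ * (Tᵀ * (Mbar * T))) *ᵥ e₃) := by
        simp only [G, M, mulVec_smul, mulVec_mulVec, Matrix.mul_assoc]
    _ = g • (Mbar *ᵥ (T *ᵥ e₃)) := by rw [nonsing_inv_mul_cancel_left _ _ hT, mulVec_mulVec]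
    _ = (m * g) • e₃ := by rw [hTe, hMe, smul_smul, mul_comm]
end

section
/- Let M_b be an invertible 6×6 real matrix and M_j an invertible n×n real matrix, and set M := fromBlocks M_b 0 0 M_j. Let J_b be a 6×6 real matrix and J_j a 6×n real matrix, and let J := (J_b J_j) be the corresponding 6×(6+n) matrix. Let h ∈ ℝ^{6+n}, f ∈ ℝ⁶, τ ∈ ℝⁿ, d ∈ ℝ⁶, and define the acceleration ν̇ := M⁻¹ *ᵥ (Sum.elim 0 τ + Jᵀ *ᵥ f - h) and Λ := J_j * M_j⁻¹. Then J *ᵥ ν̇ + d = 0 if and only if Λ *ᵥ τ = J *ᵥ (M⁻¹ *ᵥ (h - Jᵀ *ᵥ f)) - d. -/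
open Matrix

section BlockDiagonal

variable {R l m n : Type*} [CommRing R] [Fintype m] [Fintype n] [DecidableEq m] [DecidableEq n]

theorem Matrix.inv_fromBlocks_zero_zero {A : Matrix m m R} {D : Matrix n n R}
    (hA : IsUnit A) (hD : IsUnit D) :
    (fromBlocks A 0 0 D)⁻¹ = fromBlocks A⁻¹ 0 0 D⁻¹ := by
  simpa using inv_fromBlocks_zero₂₁_of_isUnit_iff A 0 D (iff_of_true hA hD)

theorem Matrix.fromCols_mulVec_inv_fromBlocks_zero_zero_inr (J₁ : Matrix l m R)
    (J₂ : Matrix l n R) {A : Matrix m m R} {D : Matrix n n R} (hA : IsUnit A) (hD : IsUnit D)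
    (τ : n → R) :
    fromCols J₁ J₂ *ᵥ ((fromBlocks A 0 0 D)⁻¹ *ᵥ Sum.elim 0 τ) = (J₂ * D⁻¹) *ᵥ τ := by
  simp [inv_fromBlocks_zero_zero hA hD, fromBlocks_mulVec, mulVec_mulVec]

end BlockDiagonal

theorem stmt_9 (n : ℕ)
    (M_b : Matrix (Fin 6) (Fin 6) ℝ) (hMb : IsUnit M_b)
    (M_j : Matrix (Fin n) (Fin n) ℝ) (hMj : IsUnit M_j)
    (J_b : Matrix (Fin 6) (Fin 6) ℝ) (J_j : Matrix (Fin 6) (Fin n) ℝ)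
    (h : (Fin 6 ⊕ Fin n) → ℝ) (f : Fin 6 → ℝ) (τ : Fin n → ℝ) (d : Fin 6 → ℝ) :
    let M : Matrix (Fin 6 ⊕ Fin n) (Fin 6 ⊕ Fin n) ℝ := Matrix.fromBlocks M_b 0 0 M_j
    let J : Matrix (Fin 6) (Fin 6 ⊕ Fin n) ℝ := Matrix.fromCols J_b J_j
    let νdot : (Fin 6 ⊕ Fin n) → ℝ := M⁻¹ *ᵥ (Sum.elim (0 : Fin 6 → ℝ) τ + Jᵀ *ᵥ f - h)
    let Λ : Matrix (Fin 6) (Fin n) ℝ := J_j * M_j⁻¹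
    J *ᵥ νdot + d = 0 ↔ Λ *ᵥ τ = J *ᵥ (M⁻¹ *ᵥ (h - Jᵀ *ᵥ f)) - d := by
  intro M J νdot Λ
  have hνdot : νdot = M⁻¹ *ᵥ Sum.elim 0 τ - M⁻¹ *ᵥ (h - Jᵀ *ᵥ f) := by
    rw [← mulVec_sub, sub_sub_eq_add_sub]
  have hΛ : J *ᵥ (M⁻¹ *ᵥ Sum.elim 0 τ) = Λ *ᵥ τ :=
    fromCols_mulVec_inv_fromBlocks_zero_zero_inr J_b J_j hMb hMj τ
  rw [hνdot, mulVec_sub, hΛ, sub_add, sub_eq_zero]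
end

section
/- Let K_p and K_i be symmetric positive definite n×n real matrices. Then every complex eigenvalue λ of the 2n×2n real block matrix A := fromBlocks (-K_p) (-K_i) 1ₙ 0 has strictly negative real part; i.e., the closed-loop linear momentum-error dynamics (Ḣ̃, İ) = (-K_p H̃ - K_i I, H̃) are exponentially stable. -/
/-!
An eigenvector `(x, y)` of `A = [[-K_p, -K_i], [1, 0]]` for `λ` has `x = λ y` with `y ≠ 0`, and
`(λ² + λ K_p + K_i) y = 0`. Pairing with `y*` gives the scalar equation `λ² s + λ p + q = 0` with
`s = y* y`, `p = y* K_p y`, `q = y* K_i y` all positive reals, and the roots of such a quadratic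
lie in the open left half-plane.
-/

open Matrix
open scoped ComplexOrder

theorem Matrix.exists_mulVec_eq_smul_of_mem_spectrum {K n : Type*} [Field K] [Fintype n]
    [DecidableEq n] {A : Matrix n n K} {μ : K} (h : μ ∈ spectrum K A) :
    ∃ v ≠ 0, A *ᵥ v = μ • v := by
  rw [← spectrum_toLin', ← Module.End.hasEigenvalue_iff_mem_spectrum] at h
  obtain ⟨v, hv⟩ := h.exists_hasEigenvector
  exact ⟨v, hv.2, by simpa using hv.apply_eq_smul⟩

theorem Matrix.exists_ne_zero_quadratic_eq_zero_of_fromBlocks_mulVec_eq_smul {R n : Type*}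
    [CommRing R] [Fintype n] [DecidableEq n] {P Q : Matrix n n R} {μ : R} {v : n ⊕ n → R}
    (hv0 : v ≠ 0) (hv : fromBlocks (-P) (-Q) 1 0 *ᵥ v = μ • v) :
    ∃ y ≠ 0, μ ^ 2 • y + μ • (P *ᵥ y) + Q *ᵥ y = 0 := by
  obtain ⟨x, y, rfl⟩ : ∃ x y, v = x ⊕ᵥ y := ⟨_, _, (Sum.elim_comp_inl_inr v).symm⟩
  rw [fromBlocks_mulVec] at hv
  have hx : x = μ • y := funext fun i => by simpa using congrFun hv (.inr i)
  have hy : -(P *ᵥ x) - Q *ᵥ y = μ • x := funext fun i => by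
    simpa [sub_eq_add_neg, neg_mulVec] using congrFun hv (.inl i)
  subst hx
  refine ⟨y, fun hy0 => hv0 ?_, ?_⟩
  · simp [hy0]
  · rw [mulVec_smul, smul_smul, ← pow_two] at hy
    rw [← hy]
    abel

/-- Positive semidefiniteness comes from a factorisation `M = Xᴴ X`, which survives the
complexification; definiteness is then invertibility. -/
theorem Matrix.PosDef.map_ofReal {n : Type*} [Fintype n] [DecidableEq n] {M : Matrix n n ℝ}
    (hM : M.PosDef) : (M.map ((↑) : ℝ → ℂ)).PosDef := by
  have hpsd : (M.map ((↑) : ℝ → ℂ)).PosSemidef := by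
    open scoped MatrixOrder in
    obtain ⟨X, rfl⟩ := CStarAlgebra.nonneg_iff_eq_star_mul_self.mp hM.posSemidef.nonneg
    change ((Xᴴ * X).map Complex.ofRealHom).PosSemidef
    rw [Matrix.map_mul,
      conjTranspose_map (Complex.ofRealHom : ℝ → ℂ) fun _ => (Complex.conj_ofReal _).symm]
    exact posSemidef_conjTranspose_mul_self _
  rw [hpsd.posDef_iff_det_ne_zero]
  exact Complex.ofRealHom.map_det M ▸ Complex.ofReal_ne_zero.mpr hM.det_pos.ne'

theorem Complex.re_neg_of_quadratic_eq_zero {a b c z : ℂ} (ha : 0 < a) (hb : 0 < b) (hc : 0 < c)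
    (h : a * z ^ 2 + b * z + c = 0) : z.re < 0 := by
  rw [pos_iff] at ha hb hc
  have hre := congrArg re h
  have him := congrArg im h
  simp only [pow_two, add_re, mul_re, add_im, mul_im, ← ha.2, ← hb.2, ← hc.2, zero_re,
    zero_im] at hre him
  by_contra! hz
  have hy : z.im = 0 := by
    have : z.im * (2 * a.re * z.re + b.re) = 0 := by linarith
    exact (mul_eq_zero.mp this).resolve_right (by linarith [mul_nonneg ha.1.le hz])
  rw [hy] at hre
  nlinarith [mul_nonneg ha.1.le (mul_self_nonneg z.re), mul_nonneg hb.1.le hz]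

theorem stmt_12 (n : ℕ) (K_p K_i : Matrix (Fin n) (Fin n) ℝ)
    (hKp : K_p.PosDef) (hKi : K_i.PosDef) :
    let A : Matrix (Fin n ⊕ Fin n) (Fin n ⊕ Fin n) ℝ :=
      Matrix.fromBlocks (-K_p) (-K_i) 1 0
    ∀ lam : ℂ, lam ∈ spectrum ℂ (A.map (Complex.ofReal)) → lam.re < 0 := by
  intro A lam hlam
  obtain ⟨v, hv0, hv⟩ := exists_mulVec_eq_smul_of_mem_spectrum hlam
  have hA : A.map Complex.ofReal =
      fromBlocks (-K_p.map Complex.ofReal) (-K_i.map Complex.ofReal) 1 0 := by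
    simp [A, fromBlocks_map, Matrix.map_neg _ Complex.ofReal_neg]
  rw [hA] at hv
  obtain ⟨y, hy0, hy⟩ := exists_ne_zero_quadratic_eq_zero_of_fromBlocks_mulVec_eq_smul hv0 hv
  refine Complex.re_neg_of_quadratic_eq_zero (dotProduct_star_self_pos_iff.mpr hy0)
    (hKp.map_ofReal.dotProduct_mulVec_pos hy0) (hKi.map_ofReal.dotProduct_mulVec_pos hy0) ?_
  simpa [dotProduct_add, dotProduct_smul, mul_comm] using congrArg (star y ⬝ᵥ ·) hy
end
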